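/- Let N ≥ 1 and set M = 2N. Then the Kolmogorov N-width of the set Ψ_{2N} = {ψ_{2N,m} : 1 ≤ m ≤ 2N} in L²(Ω_I) equals 1/(2√N), i.e., inf over all N-dimensional linear subspaces V ⊆ L²(Ω_I) of max_{1 ≤ m ≤ 2N} inf_{v ∈ V} ‖ψ_{2N,m} − v‖_{L²(Ω_I)} = (1/√2)·(1/√(2N)) = 1/(2√N). -/

import Mathlib

/-!
Each ψ_{M,m} lives on two thin wedges of slope width 1/M, of total area 1/M, and the wedges of
different m are disjoint; so the √M ψ_{M,m} are orthonormal. For 2N orthonormal vectors e_i and any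
N-dimensional V, Bessel's inequality in an orthonormal basis of V gives
∑ dist(e_i, V)² ≥ 2N − N, so some e_i is at distance at least 1/√2 from V. Conversely, grouping
the e_i in pairs, the span of the N pair sums contains the midpoint of each pair, which is at
distance ‖e_i − e_j‖ / 2 = 1/√2 from both. Scaling by ‖ψ_{2N,m}‖ = 1/√(2N) gives 1/(2√N).
-/

noncomputable section
open MeasureTheory Set ENNReal

/-- The space-time domain Ω_I = (0,1) × (−1,1). -/
def ΩI : Set (ℝ × ℝ) := Ioo (0:ℝ) 1 ×ˢ Ioo (-1:ℝ) 1

instance : Fact (volume ΩI < ∞) := by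
  constructor
  rw [ΩI, Measure.volume_eq_prod, Measure.prod_prod, Real.volume_Ioo, Real.volume_Ioo]
  exact ENNReal.mul_lt_top ENNReal.ofReal_lt_top ENNReal.ofReal_lt_top

/-- Lebesgue measure restricted to Ω_I. -/
def volΩ : Measure (ℝ × ℝ) := volume.restrict ΩI

instance : IsFiniteMeasure volΩ := by
  rw [volΩ]; infer_instance

/-- The parametrized solution φ_μ as a function on ℝ × ℝ. -/
def phiFun (μ : ℝ) : ℝ × ℝ → ℝ := fun p =>
  if p.2 < -μ * p.1 then 1 else if μ * p.1 ≤ p.2 then -1 else 0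

lemma phiFun_measurable (μ : ℝ) : Measurable (phiFun μ) := by
  unfold phiFun
  refine Measurable.ite ?_ measurable_const (Measurable.ite ?_ measurable_const measurable_const)
  · exact measurableSet_lt measurable_snd (measurable_fst.const_mul (-μ))
  · exact measurableSet_le (measurable_fst.const_mul μ) measurable_snd

lemma phiFun_memℒp (μ : ℝ) : MemLp (phiFun μ) 2 volΩ := by
  refine MemLp.of_bound (phiFun_measurable μ).aestronglyMeasurable 1 ?_
  refine Filter.Eventually.of_forall fun p => ?_
  unfold phiFun
  split_ifs <;> simp

/-- φ_μ as an element of L²(Ω_I). -/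
def phiLp (μ : ℝ) : Lp ℝ 2 volΩ := (phiFun_memℒp μ).toLp (phiFun μ)

/-- ψ_{M,m} as a function on ℝ × ℝ. -/
def psiFun (M m : ℕ) : ℝ × ℝ → ℝ := fun p =>
  if (-((m:ℝ)/M) * p.1 ≤ p.2 ∧ p.2 < -(((m:ℝ)-1)/M) * p.1) then 1
  else if ((((m:ℝ)-1)/M) * p.1 ≤ p.2 ∧ p.2 < ((m:ℝ)/M) * p.1) then -1 else 0

lemma psiFun_measurable (M m : ℕ) : Measurable (psiFun M m) := by
  unfold psiFun
  refine Measurable.ite ?_ measurable_const (Measurable.ite ?_ measurable_const measurable_const) <;>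
  · exact MeasurableSet.inter
      (measurableSet_le (measurable_fst.const_mul _) measurable_snd)
      (measurableSet_lt measurable_snd (measurable_fst.const_mul _))

lemma psiFun_memℒp (M m : ℕ) : MemLp (psiFun M m) 2 volΩ := by
  refine MemLp.of_bound (psiFun_measurable M m).aestronglyMeasurable 1 ?_
  refine Filter.Eventually.of_forall fun p => ?_
  unfold psiFun
  split_ifs <;> simp

/-- ψ_{M,m} as an element of L²(Ω_I). -/
def psiLp (M m : ℕ) : Lp ℝ 2 volΩ := (psiFun_memℒp M m).toLp (psiFun M m)

open Metric Module


open scoped RealInnerProductSpace Pointwise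

section KolmogorovWidth

variable {E : Type*} [NormedAddCommGroup E] [InnerProductSpace ℝ E]

def kolmogorovWidth {ι : Type*} (n : ℕ) (v : ι → E) : ℝ :=
  ⨅ V : {V : Submodule ℝ E // finrank ℝ V = n}, ⨆ i, infDist (v i) (V.1 : Set E)

namespace Submodule

variable (V : Submodule ℝ E)

theorem smul_coe_eq_self {c : ℝ} (hc : c ≠ 0) : c • (V : Set E) = V := by
  ext y
  refine ⟨?_, fun hy => ⟨c⁻¹ • y, V.smul_mem _ hy, smul_inv_smul₀ hc y⟩⟩
  rintro ⟨x, hx, rfl⟩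
  exact V.smul_mem c hx

theorem infDist_smul (c : ℝ) (x : E) : infDist (c • x) (V : Set E) = |c| * infDist x V := by
  rcases eq_or_ne c 0 with rfl | hc
  · simp [infDist_zero_of_mem V.zero_mem]
  · rw [← Real.norm_eq_abs, ← infDist_smul₀ hc, V.smul_coe_eq_self hc]

theorem infDist_eq_norm_sub_starProjection [V.HasOrthogonalProjection] (x : E) :
    infDist x V = ‖x - V.starProjection x‖ := by
  rw [infDist_eq_iInf, starProjection_minimal]
  simp only [dist_eq_norm]
  rfl

theorem infDist_sq [V.HasOrthogonalProjection] (x : E) :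
    infDist x V ^ 2 = ‖x‖ ^ 2 - ‖V.starProjection x‖ ^ 2 := by
  rw [V.norm_sq_eq_add_norm_sq_starProjection x, starProjection_orthogonal_val,
    infDist_eq_norm_sub_starProjection]
  ring

theorem norm_starProjection_sq_eq_sum {ι : Type*} [Fintype ι] [V.HasOrthogonalProjection]
    (u : OrthonormalBasis ι ℝ V) (x : E) :
    ‖V.starProjection x‖ ^ 2 = ∑ i, ⟪(u i : E), x⟫ ^ 2 := by
  simpa using (u.sum_sq_inner_right (V.orthogonalProjectionOnto x)).symm

end Submodule

theorem kolmogorovWidth_smul {ι : Type*} (n : ℕ) (v : ι → E) {c : ℝ} (hc : 0 ≤ c) :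
    kolmogorovWidth n (fun i => c • v i) = c * kolmogorovWidth n v := by
  simp only [kolmogorovWidth, Submodule.infDist_smul, abs_of_nonneg hc,
    Real.mul_iInf_of_nonneg hc, Real.mul_iSup_of_nonneg hc]

namespace Orthonormal

variable {ι : Type*} {e : ι → E}

theorem sum_norm_starProjection_sq_le [Fintype ι] (he : Orthonormal ℝ e) (V : Submodule ℝ E)
    [FiniteDimensional ℝ V] : ∑ i, ‖V.starProjection (e i)‖ ^ 2 ≤ finrank ℝ V := by
  let u := stdOrthonormalBasis ℝ V
  calc ∑ i, ‖V.starProjection (e i)‖ ^ 2 = ∑ j, ∑ i, ‖⟪e i, (u j : E)⟫‖ ^ 2 := by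
        simp_rw [V.norm_starProjection_sq_eq_sum u, Real.norm_eq_abs, sq_abs, real_inner_comm]
        exact Finset.sum_comm
    _ ≤ ∑ j, ‖(u j : E)‖ ^ 2 := Finset.sum_le_sum fun j _ => he.sum_inner_products_le _
    _ = finrank ℝ V := by
        have hu : ∀ j, ‖(u j : E)‖ = 1 := u.orthonormal.1
        simp [hu]

theorem sum_infDist_sq_ge [Fintype ι] (he : Orthonormal ℝ e) (V : Submodule ℝ E)
    [FiniteDimensional ℝ V] :
    (Fintype.card ι - finrank ℝ V : ℝ) ≤ ∑ i, infDist (e i) V ^ 2 := by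
  have := he.sum_norm_starProjection_sq_le V
  rw [Finset.sum_congr rfl fun i _ => V.infDist_sq (e i)]
  simp only [he.1, one_pow, Finset.sum_sub_distrib, Finset.sum_const, Finset.card_univ,
    nsmul_eq_mul, mul_one]
  linarith

theorem exists_finrank_eq_forall_infDist_le [Fintype ι] {e : Fin 2 × ι → E}
    (he : Orthonormal ℝ e) :
    ∃ V : Submodule ℝ E, finrank ℝ V = Fintype.card ι ∧ ∀ p, infDist (e p) V ≤ (√2)⁻¹ := by
  classical
  have he' := orthonormal_iff_ite.mp he
  let w : ι → E := fun k => e (0, k) + e (1, k)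
  have hw_ne : ∀ k, w k ≠ 0 := fun k hk => by
    have h : ⟪w k, e (0, k)⟫ = 1 := by simp [w, inner_add_left, he', he.1]
    simp [hk] at h
  have hw_orth : Pairwise fun k l => ⟪w k, w l⟫ = 0 := fun k l hkl => by
    simp [w, inner_add_left, inner_add_right, he', hkl]
  refine ⟨Submodule.span ℝ (Set.range w), ?_, ?_⟩
  · rw [finrank_span_eq_card (linearIndependent_of_ne_zero_of_inner_eq_zero hw_ne hw_orth)]
  have key : ∀ p q, p ≠ q → e p + e q ∈ Submodule.span ℝ (Set.range w) →
      infDist (e p) (Submodule.span ℝ (Set.range w)) ≤ (√2)⁻¹ := by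
    intro p q hpq hmem
    have hdist : dist (e p) (e q) = √2 := by
      rw [dist_eq_norm, ← Real.sqrt_sq (norm_nonneg _), norm_sub_sq_real, he.1, he.1, he.2 hpq]
      norm_num
    calc infDist (e p) (Submodule.span ℝ (Set.range w))
        ≤ dist (e p) (midpoint ℝ (e p) (e q)) := by
          refine infDist_le_dist_of_mem ?_
          rw [midpoint_eq_smul_add]
          exact Submodule.smul_mem _ _ hmem
      _ = (√2)⁻¹ := by
          rw [dist_left_midpoint, hdist]
          field_simp
          norm_num
  rintro ⟨a, k⟩
  have hmem : w k ∈ Submodule.span ℝ (Set.range w) := Submodule.subset_span ⟨k, rfl⟩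
  fin_cases a
  · exact key _ (1, k) (by simp) hmem
  · exact key _ (0, k) (by simp) (by simpa [w, add_comm] using hmem)

theorem exists_inv_sqrt_two_le_infDist [Fintype ι] (he : Orthonormal ℝ e) {n : ℕ}
    (hn : 0 < n) (hι : Fintype.card ι = 2 * n) (V : Submodule ℝ E) (hV : finrank ℝ V = n) :
    ∃ i, (√2)⁻¹ ≤ infDist (e i) V := by
  have : FiniteDimensional ℝ V := .of_finrank_pos (hV ▸ hn)
  have hsum : ∑ _i : ι, (2 : ℝ)⁻¹ ≤ ∑ i, infDist (e i) V ^ 2 := by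
    have := he.sum_infDist_sq_ge V
    simp only [Finset.sum_const, Finset.card_univ, hι, hV, nsmul_eq_mul] at this ⊢
    push_cast at this ⊢
    linarith
  have hne : (Finset.univ : Finset ι).Nonempty := Finset.univ_nonempty_iff.mpr
    (Fintype.card_pos_iff.mp (by omega))
  obtain ⟨i, -, hi⟩ := Finset.exists_le_of_sum_le hne hsum
  refine ⟨i, ?_⟩
  rw [← Real.sqrt_inv, ← Real.sqrt_sq infDist_nonneg]
  exact Real.sqrt_le_sqrt hi

theorem kolmogorovWidth_eq [Fintype ι] (he : Orthonormal ℝ e) {n : ℕ} (hn : 0 < n)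
    (hι : Fintype.card ι = 2 * n) : kolmogorovWidth n e = (√2)⁻¹ := by
  let σ : Fin 2 × Fin n ≃ ι := Fintype.equivOfCardEq (by simp [hι])
  obtain ⟨V₀, hV₀, hdist⟩ := (he.comp σ σ.injective).exists_finrank_eq_forall_infDist_le
  have hbdd : BddBelow (Set.range fun V : {V : Submodule ℝ E // finrank ℝ V = n} =>
      ⨆ i, infDist (e i) (V.1 : Set E)) :=
    ⟨0, by rintro _ ⟨V, rfl⟩; exact Real.iSup_nonneg fun i => infDist_nonneg⟩
  have : Nonempty {V : Submodule ℝ E // finrank ℝ V = n} := ⟨⟨V₀, by simpa using hV₀⟩⟩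
  refine le_antisymm (ciInf_le_of_le hbdd ⟨V₀, by simpa using hV₀⟩ ?_) (le_ciInf ?_)
  · refine Real.iSup_le (fun i => ?_) (by positivity)
    simpa using hdist (σ.symm i)
  · rintro ⟨V, hV⟩
    obtain ⟨i, hi⟩ := he.exists_inv_sqrt_two_le_infDist hn hι V hV
    exact hi.trans
      (le_ciSup (f := fun i => infDist (e i) (V : Set E)) (Set.finite_range _).bddAbove i)

end Orthonormal

end KolmogorovWidth

def wedge (a b : ℝ) : Set (ℝ × ℝ) := {p | a * p.1 ≤ p.2 ∧ p.2 < b * p.1}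

theorem measurableSet_wedge (a b : ℝ) : MeasurableSet (wedge a b) :=
  (measurableSet_le (measurable_fst.const_mul a) measurable_snd).inter
    (measurableSet_lt measurable_snd (measurable_fst.const_mul b))

theorem disjoint_wedge {a b c d : ℝ} (hab : a ≤ b) (hbc : b ≤ c) :
    Disjoint (wedge a b) (wedge c d) := by
  rw [Set.disjoint_left]
  rintro ⟨t, x⟩ ⟨h₁, h₂⟩ ⟨h₃, -⟩
  have ht : 0 < t := by
    by_contra! ht
    nlinarith
  nlinarith

theorem volume_preimage_mk_wedge_inter_ΩI {a b : ℝ} (ha : -1 ≤ a) (hab : a ≤ b)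
    (hb : b ≤ 1) (t : ℝ) : volume (Prod.mk t ⁻¹' (wedge a b ∩ ΩI)) =
      (Ioo 0 1).indicator (fun t => ENNReal.ofReal ((b - a) * t)) t := by
  by_cases ht : t ∈ Ioo (0 : ℝ) 1
  · have hslice : Prod.mk t ⁻¹' (wedge a b ∩ ΩI) = Ico (a * t) (b * t) := by
      ext x
      simp only [wedge, ΩI, mem_preimage, mem_inter_iff, mem_ofPred_eq, mem_prod, mem_Ioo,
        mem_Ico]
      obtain ⟨ht₀, ht₁⟩ := ht
      constructor
      · tauto
      · rintro ⟨h₁, h₂⟩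
        exact ⟨⟨h₁, h₂⟩, ⟨ht₀, ht₁⟩, by nlinarith, by nlinarith⟩
    rw [hslice, Real.volume_Ico, indicator_of_mem ht]
    ring_nf
  · have hslice : Prod.mk t ⁻¹' (wedge a b ∩ ΩI) = ∅ := by
      ext x
      simp only [ΩI, mem_preimage, mem_inter_iff, mem_prod, mem_empty_iff_false, iff_false]
      tauto
    rw [hslice, indicator_of_notMem ht, measure_empty]

theorem volΩ_wedge {a b : ℝ} (ha : -1 ≤ a) (hab : a ≤ b) (hb : b ≤ 1) :
    volΩ (wedge a b) = ENNReal.ofReal ((b - a) / 2) := by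
  have hmeas : MeasurableSet (wedge a b ∩ ΩI) :=
    (measurableSet_wedge a b).inter (measurableSet_Ioo.prod measurableSet_Ioo)
  rw [volΩ, Measure.restrict_apply (measurableSet_wedge a b), Measure.volume_eq_prod,
    Measure.prod_apply hmeas]
  simp_rw [volume_preimage_mk_wedge_inter_ΩI ha hab hb]
  rw [lintegral_indicator measurableSet_Ioo, ← ofReal_integral_eq_lintegral_ofReal]
  · rw [integral_Ioc_eq_integral_Ioo.symm, ← intervalIntegral.integral_of_le zero_le_one,
      intervalIntegral.integral_const_mul, integral_id]
    ring_nf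
  · exact (continuous_const.mul continuous_id).integrableOn_Icc.mono_set Ioo_subset_Icc_self
  · exact (ae_restrict_iff' measurableSet_Ioo).mpr
      (Filter.Eventually.of_forall fun t ht => mul_nonneg (sub_nonneg.mpr hab) ht.1.le)

def psiSupport (M m : ℕ) : Set (ℝ × ℝ) :=
  wedge (-((m : ℝ) / M)) (-(((m : ℝ) - 1) / M)) ∪ wedge (((m : ℝ) - 1) / M) ((m : ℝ) / M)

theorem measurableSet_psiSupport (M m : ℕ) : MeasurableSet (psiSupport M m) :=
  (measurableSet_wedge _ _).union (measurableSet_wedge _ _)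

theorem psiFun_mul_self (M m : ℕ) (p : ℝ × ℝ) :
    psiFun M m p * psiFun M m p = (psiSupport M m).indicator 1 p := by
  simp only [psiFun, psiSupport, wedge, indicator, mem_union, mem_ofPred_eq, Pi.one_apply]
  split_ifs <;> first | tauto | norm_num

theorem psiFun_eq_zero_of_notMem {M m : ℕ} {p : ℝ × ℝ} (hp : p ∉ psiSupport M m) :
    psiFun M m p = 0 := by
  simp only [psiSupport, wedge, mem_union, mem_ofPred_eq, not_or] at hp
  simp only [psiFun, if_neg hp.1, if_neg hp.2]

theorem disjoint_psiSupport {M m m' : ℕ} (hm : 1 ≤ m) (hm' : 1 ≤ m') (hmm' : m ≠ m') :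
    Disjoint (psiSupport M m) (psiSupport M m') := by
  wlog hlt : m < m' generalizing m m'
  · exact (this hm' hm hmm'.symm (by omega)).symm
  have hm₁ : (1 : ℝ) ≤ m := by exact_mod_cast hm
  have hmm'₁ : (m : ℝ) + 1 ≤ m' := by exact_mod_cast hlt
  simp only [psiSupport, disjoint_union_left, disjoint_union_right]
  refine ⟨⟨(disjoint_wedge ?_ ?_).symm, (disjoint_wedge ?_ ?_).symm⟩,
    disjoint_wedge ?_ ?_, disjoint_wedge ?_ ?_⟩ <;>
  · try simp only [← neg_div]
    exact div_le_div_of_nonneg_right (by linarith) M.cast_nonneg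

theorem volΩ_real_psiSupport {M m : ℕ} (hm : 1 ≤ m) (hmM : m ≤ M) :
    volΩ.real (psiSupport M m) = 1 / M := by
  have hM : (0 : ℝ) < M := by exact_mod_cast hm.trans hmM
  have hm₁ : (1 : ℝ) ≤ m := by exact_mod_cast hm
  have hmM₁ : (m : ℝ) ≤ M := by exact_mod_cast hmM
  rw [psiSupport, measureReal_union (disjoint_wedge ?_ ?_) (measurableSet_wedge _ _),
    measureReal_def, measureReal_def, volΩ_wedge ?_ ?_ ?_, volΩ_wedge ?_ ?_ ?_,
    ENNReal.toReal_ofReal ?_, ENNReal.toReal_ofReal ?_]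
  · ring
  all_goals field_simp; linarith

theorem psiFun_mul_eq_zero {M m m' : ℕ} (hm : 1 ≤ m) (hm' : 1 ≤ m') (hmm' : m ≠ m')
    (p : ℝ × ℝ) : psiFun M m p * psiFun M m' p = 0 := by
  by_cases hp : p ∈ psiSupport M m
  · rw [psiFun_eq_zero_of_notMem ((disjoint_psiSupport hm hm' hmm').notMem_of_mem_left hp),
      mul_zero]
  · rw [psiFun_eq_zero_of_notMem hp, zero_mul]

theorem inner_psiLp (M m m' : ℕ) :
    ⟪psiLp M m, psiLp M m'⟫ = ∫ p, psiFun M m p * psiFun M m' p ∂volΩ := by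
  rw [L2.inner_def]
  refine integral_congr_ae ?_
  filter_upwards [(psiFun_memℒp M m).coeFn_toLp, (psiFun_memℒp M m').coeFn_toLp] with p hp hp'
  rw [psiLp, psiLp, hp, hp', real_inner_eq_re_inner, RCLike.inner_apply]
  simp [mul_comm]

theorem orthonormal_psiLp (M : ℕ) :
    Orthonormal ℝ fun m : Fin M => √M • psiLp M (m + 1) := by
  rw [orthonormal_iff_ite]
  intro i j
  simp only [real_inner_smul_left, real_inner_smul_right, inner_psiLp]
  split_ifs with hij
  · subst hij
    have hM : (0 : ℝ) < M := by exact_mod_cast i.pos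
    rw [integral_congr_ae (Filter.Eventually.of_forall (psiFun_mul_self M (i + 1))),
      integral_indicator_one (measurableSet_psiSupport _ _),
      volΩ_real_psiSupport (by omega) (by omega), ← mul_assoc, Real.mul_self_sqrt hM.le]
    field_simp
  · rw [integral_congr_ae (Filter.Eventually.of_forall
      (psiFun_mul_eq_zero (by omega) (by omega) (by simpa [Fin.ext_iff] using hij))),
      integral_zero, mul_zero, mul_zero]

/-- For N ≥ 1, the Kolmogorov N-width in L²(Ω_I) of the set
Ψ_{2N} = {ψ_{2N,m} : 1 ≤ m ≤ 2N} equals 1/(2√N). -/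
theorem kolmogorov_nwidth_psi (N : ℕ) (hN : 1 ≤ N) :
    (⨅ V : {V : Submodule ℝ (Lp ℝ 2 volΩ) // finrank ℝ V = N},
        ⨆ m : Fin (2 * N), infDist (psiLp (2 * N) (m.1 + 1)) (V.1 : Set (Lp ℝ 2 volΩ)))
      = 1 / (2 * Real.sqrt N) := by
  have hsqrt : (0 : ℝ) < √((2 * N : ℕ) : ℝ) := by positivity
  have hψ : (fun m : Fin (2 * N) => psiLp (2 * N) (m.1 + 1)) =
      fun m => (√((2 * N : ℕ) : ℝ))⁻¹ • (√((2 * N : ℕ) : ℝ) • psiLp (2 * N) (m.1 + 1)) := by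
    funext m
    rw [inv_smul_smul₀ hsqrt.ne']
  change kolmogorovWidth N (fun m : Fin (2 * N) => psiLp (2 * N) (m.1 + 1)) = _
  rw [hψ, kolmogorovWidth_smul _ _ (inv_nonneg.mpr hsqrt.le),
    (orthonormal_psiLp (2 * N)).kolmogorovWidth_eq hN (Fintype.card_fin _), ← mul_inv,
    Nat.cast_mul, Nat.cast_ofNat, Real.sqrt_mul zero_le_two, mul_comm, ← mul_assoc,
    Real.mul_self_sqrt zero_le_two, one_div]
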